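/- For every density matrix ρ on ℂ^d, M_Re(ρ) ≥ 1 − √( 1/d + (1/d)·√((d−1)² − (d−1)·M_tr(ρ)²) ). -/

import Mathlib

open Matrix Complex ComplexOrder Classical

/-- The positive semidefinite square root of a matrix (junk value `0` if not PSD). -/
noncomputable def psqrt {n : Type*} [Fintype n] [DecidableEq n] (A : Matrix n n ℂ) :
    Matrix n n ℂ :=
  if h : A.PosSemidef then
    (h.1.eigenvectorUnitary : Matrix n n ℂ) *
      diagonal ((fun x : ℝ => (x : ℂ)) ∘ Real.sqrt ∘ h.1.eigenvalues) *
      (star h.1.eigenvectorUnitary : Matrix n n ℂ)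
  else 0

/-- Entrywise complex conjugate of a matrix. -/
def mconj {m n : Type*} (A : Matrix m n ℂ) : Matrix m n ℂ := A.map (starRingEnd ℂ)

/-- Fidelity `F(ρ,σ) = Tr √(√ρ σ √ρ)`. -/
noncomputable def fidelity {n : Type*} [Fintype n] [DecidableEq n] (ρ σ : Matrix n n ℂ) : ℝ :=
  ((psqrt (psqrt ρ * σ * psqrt ρ)).trace).re

/-- The real part state `Re(ρ) = (ρ + ρ*)/2`. -/
noncomputable def reState {n : Type*} (ρ : Matrix n n ℂ) : Matrix n n ℂ :=
  ((1 : ℂ)/2) • (ρ + mconj ρ)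

/-- The imaginarity measure `M_Re(ρ) = 1 - F(ρ, Re(ρ))`. -/
noncomputable def MRe {n : Type*} [Fintype n] [DecidableEq n] (ρ : Matrix n n ℂ) : ℝ :=
  1 - fidelity ρ (reState ρ)

/-- A density matrix: positive semidefinite with trace 1. -/
def IsDensityMatrix {n : Type*} [Fintype n] (ρ : Matrix n n ℂ) : Prop :=
  ρ.PosSemidef ∧ ρ.trace = 1

/-- The trace norm `‖A‖_tr = Tr √(Aᴴ A)`. -/
noncomputable def trNorm {n : Type*} [Fintype n] [DecidableEq n] (A : Matrix n n ℂ) : ℝ :=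
  ((psqrt (Aᴴ * A)).trace).re

/-- The trace norm imaginarity `M_tr(ρ) = (1/2)‖ρ - ρ*‖_tr`. -/
noncomputable def Mtr {n : Type*} [Fintype n] [DecidableEq n] (ρ : Matrix n n ℂ) : ℝ :=
  (1/2) * trNorm (ρ - mconj ρ)

/-- The purity `P(ρ) = Tr(ρ²)`. -/
noncomputable def purity {n : Type*} [Fintype n] [DecidableEq n] (ρ : Matrix n n ℂ) : ℝ :=
  ((ρ * ρ).trace).re

/-!
Write `σ = Re ρ`, `P = Tr ρ²` and `s = Tr σ² = Tr ρσ`.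

Superfidelity: if `g` are the eigenvalues of `√ρ σ √ρ = K Kᴴ` with `K = √ρ √σ`, then
`F(ρ, σ)² = (∑ √gᵢ)² = Tr ρσ + 2 ∑_{i<j} √(gᵢ gⱼ)`. The `gᵢ gⱼ` (`i < j`) are the
eigenvalues of the second compound `C₂(K) C₂(K)ᴴ`, and `C₂(K) = C₂(√ρ) C₂(√σ)`, so by
Hölder the cross terms are at most
`‖C₂(√ρ)‖₂ ‖C₂(√σ)‖₂ = √(Tr C₂(ρ) Tr C₂(σ)) = √((1 - P)(1 - s)) / 2`.

Imaginarity: `ρ - ρ*` has squared Frobenius norm `4 (P - s)`, so comparing trace and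
Frobenius norms gives `M_tr(ρ)² ≤ d (P - s)`. Together with `P ≤ 1` and `s ≥ 1 / d`, an
elementary estimate bounds `s + √((1 - P)(1 - s))`, hence `F(ρ, Re ρ)²`, by the claimed
quantity.
-/

section SpectralForm

variable {n : Type*} [Fintype n] [DecidableEq n]

lemma Matrix.PosSemidef.exists_unitary_diagonal {A : Matrix n n ℂ} (hA : A.PosSemidef) :
    ∃ (U : Matrix n n ℂ) (f : n → ℝ), Uᴴ * U = 1 ∧ (∀ i, 0 ≤ f i) ∧
      A = U * diagonal (fun i => (f i : ℂ)) * Uᴴ := by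
  refine ⟨hA.1.eigenvectorUnitary, hA.1.eigenvalues, ?_, hA.eigenvalues_nonneg, ?_⟩
  · simpa [star_eq_conjTranspose] using
      (mem_unitaryGroup_iff').mp hA.1.eigenvectorUnitary.2
  · simpa [star_eq_conjTranspose, Function.comp_def] using hA.1.spectral_theorem

variable {U : Matrix n n ℂ}

lemma conj_diagonal_mul_conj_diagonal (hU : Uᴴ * U = 1) (f g : n → ℂ) :
    U * diagonal f * Uᴴ * (U * diagonal g * Uᴴ) = U * diagonal (f * g) * Uᴴ := by
  simp only [Matrix.mul_assoc, ← Matrix.mul_assoc Uᴴ U, hU, Matrix.one_mul,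
    ← Matrix.mul_assoc (diagonal f), diagonal_mul_diagonal]
  rfl

lemma trace_conj_diagonal (hU : Uᴴ * U = 1) (f : n → ℂ) :
    (U * diagonal f * Uᴴ).trace = ∑ i, f i := by
  rw [trace_mul_cycle, hU, Matrix.one_mul, trace_diagonal]

lemma posSemidef_conj_diagonal {f : n → ℝ} (hf : ∀ i, 0 ≤ f i) :
    (U * diagonal (fun i => (f i : ℂ)) * Uᴴ).PosSemidef :=
  (posSemidef_diagonal_iff.mpr fun i => Complex.zero_le_real.mpr (hf i)).mul_mul_conjTranspose_same
    U

end SpectralForm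

section SquareRoot

variable {n : Type*} [Fintype n] [DecidableEq n] {A B U : Matrix n n ℂ}

open scoped MatrixOrder

lemma psqrt_eq_cfcSqrt (hA : A.PosSemidef) : psqrt A = CFC.sqrt A := by
  rw [psqrt, dif_pos hA, CFC.sqrt_eq_real_sqrt A hA.nonneg, cfcₙ_eq_cfc, hA.1.cfc_eq]
  rfl

lemma psqrt_conjTranspose (hA : A.PosSemidef) : (psqrt A)ᴴ = psqrt A := by
  rw [psqrt_eq_cfcSqrt hA]
  exact (nonneg_iff_posSemidef.mp (CFC.sqrt_nonneg A)).1

lemma psqrt_mul_self (hA : A.PosSemidef) : psqrt A * psqrt A = A := by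
  rw [psqrt_eq_cfcSqrt hA]
  exact CFC.sqrt_mul_sqrt_self A hA.nonneg

lemma psqrt_eq_of_mul_self (hB : B.PosSemidef) (h : B * B = A) : psqrt A = B := by
  have hA : A.PosSemidef := by
    simpa only [← h, hB.1.eq] using posSemidef_conjTranspose_mul_self B
  rw [psqrt_eq_cfcSqrt hA]
  exact CFC.sqrt_unique h hB.nonneg

lemma psqrt_conj_diagonal (hU : Uᴴ * U = 1) {f : n → ℝ} (hf : ∀ i, 0 ≤ f i) :
    psqrt (U * diagonal (fun i => (f i : ℂ)) * Uᴴ) =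
      U * diagonal (fun i => (√(f i) : ℂ)) * Uᴴ := by
  refine psqrt_eq_of_mul_self (posSemidef_conj_diagonal fun i => Real.sqrt_nonneg _) ?_
  rw [conj_diagonal_mul_conj_diagonal hU]
  congr 3 with i
  simp only [Pi.mul_apply, ← Complex.ofReal_mul, Real.mul_self_sqrt (hf i)]

lemma re_trace_psqrt_conj_diagonal (hU : Uᴴ * U = 1) {f : n → ℝ} (hf : ∀ i, 0 ≤ f i) :
    (psqrt (U * diagonal (fun i => (f i : ℂ)) * Uᴴ)).trace.re = ∑ i, √(f i) := by
  rw [psqrt_conj_diagonal hU hf, trace_conj_diagonal hU, ← Complex.ofReal_sum, Complex.ofReal_re]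

end SquareRoot

section DensityMatrix

variable {n : Type*} [Fintype n] [DecidableEq n] {ρ : Matrix n n ℂ}

lemma IsDensityMatrix.exists_eigenvalues (hρ : IsDensityMatrix ρ) :
    ∃ f : n → ℝ, (∀ i, 0 ≤ f i) ∧ ∑ i, f i = 1 ∧ purity ρ = ∑ i, f i ^ 2 := by
  obtain ⟨U, f, hU, hf, rfl⟩ := hρ.1.exists_unitary_diagonal
  refine ⟨f, hf, ?_, ?_⟩
  · have h := hρ.2
    rwa [trace_conj_diagonal hU, ← Complex.ofReal_sum, Complex.ofReal_eq_one] at h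
  · rw [purity, conj_diagonal_mul_conj_diagonal hU, trace_conj_diagonal hU]
    simp [sq, ← Complex.ofReal_mul, ← Complex.ofReal_sum]

lemma IsDensityMatrix.purity_le_one (hρ : IsDensityMatrix ρ) : purity ρ ≤ 1 := by
  obtain ⟨f, hf, hsum, hpur⟩ := hρ.exists_eigenvalues
  rw [hpur, ← one_pow 2, ← hsum]
  exact Finset.sum_sq_le_sq_sum_of_nonneg fun i _ => hf i

lemma IsDensityMatrix.one_le_card_mul_purity (hρ : IsDensityMatrix ρ) :
    1 ≤ Fintype.card n * purity ρ := by
  obtain ⟨f, -, hsum, hpur⟩ := hρ.exists_eigenvalues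
  rw [hpur, ← one_pow 2, ← hsum]
  exact sq_sum_le_card_mul_sum_sq

end DensityMatrix

section SecondCompound

variable {ι : Type*} [LinearOrder ι]

abbrev StrictPair (ι : Type*) [LinearOrder ι] : Type _ := {p : ι × ι // p.1 < p.2}

lemma sum_strictPair [Fintype ι] {M : Type*} [AddCommMonoid M] (F : ι → ι → M) :
    ∑ p : StrictPair ι, F p.1.1 p.1.2 = ∑ i, ∑ j, if i < j then F i j else 0 := by
  rw [← Finset.sum_subtype (Finset.univ.filter fun p : ι × ι => p.1 < p.2) (by simp)
    (fun p => F p.1 p.2), Finset.sum_filter, Fintype.sum_prod_type]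

lemma sum_sum_eq_sum_strictPair_add [Fintype ι] {M : Type*} [AddCommMonoid M]
    (F : ι → ι → M) :
    ∑ i, ∑ j, F i j = ∑ p : StrictPair ι, (F p.1.1 p.1.2 + F p.1.2 p.1.1) + ∑ i, F i i := by
  have hsplit : ∀ i j, F i j = ((if i < j then F i j else 0) + if j < i then F i j else 0) +
      if i = j then F i j else 0 := by
    intro i j
    rcases lt_trichotomy i j with h | rfl | h
    · simp [h, h.not_gt, h.ne]
    · simp
    · simp [h, h.not_gt, h.ne']
  simp_rw [Finset.sum_add_distrib, sum_strictPair]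
  conv_lhs => enter [2, i, 2, j]; rw [hsplit i j]
  simp_rw [Finset.sum_add_distrib, Finset.sum_ite_eq, Finset.mem_univ, if_true]
  rw [sum_strictPair fun i j => F j i,
    Finset.sum_comm (f := fun i j => if j < i then F i j else 0)]

variable {R : Type*} [CommRing R]

def compound2 (A : Matrix ι ι R) : Matrix (StrictPair ι) (StrictPair ι) R :=
  fun p q => A p.1.1 q.1.1 * A p.1.2 q.1.2 - A p.1.1 q.1.2 * A p.1.2 q.1.1

lemma compound2_mul [Fintype ι] (A B : Matrix ι ι R) :
    compound2 (A * B) = compound2 A * compound2 B := by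
  ext ⟨⟨i, j⟩, hij⟩ ⟨⟨k, l⟩, hkl⟩
  have hexpand : compound2 (A * B) ⟨(i, j), hij⟩ ⟨(k, l), hkl⟩ =
      ∑ m, ∑ n, A i m * A j n * (B m k * B n l - B m l * B n k) := by
    simp only [compound2, mul_apply, Finset.sum_mul_sum, ← Finset.sum_sub_distrib]
    exact Finset.sum_congr rfl fun m _ => Finset.sum_congr rfl fun n _ => by ring
  have hdiag : ∑ m, A i m * A j m * (B m k * B m l - B m l * B m k) = 0 :=
    Finset.sum_eq_zero fun m _ => by ring
  rw [hexpand, sum_sum_eq_sum_strictPair_add, hdiag, add_zero, mul_apply]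
  exact Finset.sum_congr rfl fun p _ => by simp only [compound2]; ring

lemma compound2_diagonal (f : ι → R) :
    compound2 (diagonal f) = diagonal fun p : StrictPair ι => f p.1.1 * f p.1.2 := by
  ext ⟨⟨i, j⟩, hij⟩ ⟨⟨k, l⟩, hkl⟩
  simp only [compound2, diagonal_apply, Subtype.mk.injEq, Prod.mk.injEq]
  split_ifs <;> simp_all [lt_asymm hkl]

lemma compound2_one : compound2 (1 : Matrix ι ι R) = 1 := by
  simpa using compound2_diagonal fun _ : ι => (1 : R)

lemma compound2_conjTranspose [StarRing R] (A : Matrix ι ι R) :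
    (compound2 A)ᴴ = compound2 Aᴴ := by
  ext p q
  simp only [compound2, conjTranspose_apply, star_sub, star_mul']
  ring

lemma two_mul_trace_compound2 [Fintype ι] (A : Matrix ι ι R) :
    2 * (compound2 A).trace = A.trace ^ 2 - (A * A).trace := by
  have h := sum_sum_eq_sum_strictPair_add fun i j => A i i * A j j - A i j * A j i
  simp only [sub_self, Finset.sum_const_zero, add_zero, Finset.sum_sub_distrib,
    ← Finset.sum_mul_sum, ← sq] at h
  simp only [trace, diag, mul_apply]
  rw [h, Finset.mul_sum]
  exact Finset.sum_congr rfl fun p _ => by simp only [compound2]; ring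

lemma sq_sum_eq_sum_sq_add_two_mul_sum_strictPair [Fintype ι] (x : ι → R) :
    (∑ i, x i) ^ 2 = ∑ i, x i ^ 2 + 2 * ∑ p : StrictPair ι, x p.1.1 * x p.1.2 := by
  rw [sq, Finset.sum_mul_sum, sum_sum_eq_sum_strictPair_add, add_comm, Finset.mul_sum]
  simp only [sq]
  congr 1
  exact Finset.sum_congr rfl fun p _ => by ring

end SecondCompound

section TraceNorm

variable {n : Type*} [Fintype n] [DecidableEq n]

lemma norm_trace_mul_conjTranspose_le (A B : Matrix n n ℂ) :
    ‖(B * Aᴴ).trace‖ ≤ √((A * Aᴴ).trace.re) * √((B * Bᴴ).trace.re) := by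
  -- the inner product induced by the positive matrix `1` is `⟪A, B⟫ = Tr (B Aᴴ)`
  let _ := toMatrixSeminormedAddCommGroup (1 : Matrix n n ℂ) PosSemidef.one
  let _ := toMatrixInnerProductSpace (1 : Matrix n n ℂ) PosSemidef.one
  have h : ‖(B * 1 * Aᴴ).trace‖ ≤
      √(RCLike.re (A * 1 * Aᴴ).trace) * √(RCLike.re (B * 1 * Bᴴ).trace) := by
    have := norm_inner_le_norm (𝕜 := ℂ) A B
    rwa [norm_eq_sqrt_re_inner (𝕜 := ℂ) A, norm_eq_sqrt_re_inner (𝕜 := ℂ) B] at this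
  simpa only [Matrix.mul_one, RCLike.re_to_complex] using h

open scoped MatrixOrder in
lemma re_trace_mul_mul_conjTranspose_le {P : Matrix n n ℂ} (hP : IsStarProjection P)
    (Y : Matrix n n ℂ) : (Y * P * Yᴴ).trace.re ≤ (Y * Yᴴ).trace.re := by
  have h :=
    ((nonneg_iff_posSemidef.mp hP.one_sub_nonneg).mul_mul_conjTranspose_same Y).trace_nonneg
  rw [Matrix.mul_sub, Matrix.sub_mul, Matrix.mul_one, trace_sub] at h
  simpa using (Complex.le_def.mp h).1

lemma exists_mul_eq_psqrt (G : Matrix n n ℂ) :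
    ∃ V : Matrix n n ℂ, G * V = psqrt (G * Gᴴ) ∧ IsStarProjection (V * Vᴴ) := by
  obtain ⟨U, g, hU, hg, hGG⟩ := (posSemidef_self_mul_conjTranspose G).exists_unitary_diagonal
  -- `W = (G Gᴴ)^(-1/2)` on the range of `G Gᴴ` and `0` on its kernel (`0⁻¹ = 0` in `ℝ`),
  -- so that `Gᴴ W` is a partial isometry
  set W := U * diagonal (fun i => (((√(g i))⁻¹ : ℝ) : ℂ)) * Uᴴ
  have hWH : Wᴴ = W :=
    (posSemidef_conj_diagonal fun i => inv_nonneg.mpr (Real.sqrt_nonneg (g i))).1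
  have hWW : W * W = U * diagonal (fun i => ((g i)⁻¹ : ℂ)) * Uᴴ := by
    rw [conj_diagonal_mul_conj_diagonal hU]
    congr 3 with i
    simp only [Pi.mul_apply, ← Complex.ofReal_mul, ← mul_inv, Real.mul_self_sqrt (hg i),
      Complex.ofReal_inv]
  refine ⟨Gᴴ * W, ?_, ?_, ?_⟩
  · rw [← Matrix.mul_assoc, hGG, conj_diagonal_mul_conj_diagonal hU, psqrt_conj_diagonal hU hg]
    congr 3 with i
    simp only [Pi.mul_apply, ← Complex.ofReal_mul, ← div_eq_mul_inv, Real.div_sqrt]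
  · rw [IsIdempotentElem, conjTranspose_mul, conjTranspose_conjTranspose, hWH]
    calc Gᴴ * W * (W * G) * (Gᴴ * W * (W * G)) = Gᴴ * (W * W * (G * Gᴴ) * (W * W)) * G := by
          simp only [Matrix.mul_assoc]
      _ = Gᴴ * W * (W * G) := by
          have hinv : ((fun i => ((g i)⁻¹ : ℂ)) * fun i => (g i : ℂ)) *
              (fun i => ((g i)⁻¹ : ℂ)) = fun i => ((g i)⁻¹ : ℂ) := by
            ext i
            simpa using mul_inv_mul_cancel ((g i : ℂ)⁻¹)
          rw [hWW, hGG, conj_diagonal_mul_conj_diagonal hU, conj_diagonal_mul_conj_diagonal hU,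
            hinv, ← hWW]
          simp only [Matrix.mul_assoc]
  · exact IsSelfAdjoint.mul_star_self (Gᴴ * W)

lemma re_trace_psqrt_mul_le (X Y : Matrix n n ℂ) :
    (psqrt (X * Y * (X * Y)ᴴ)).trace.re ≤ √((Xᴴ * X).trace.re) * √((Y * Yᴴ).trace.re) := by
  obtain ⟨V, hV, hproj⟩ := exists_mul_eq_psqrt (X * Y)
  have htrace : (psqrt (X * Y * (X * Y)ᴴ)).trace = (Y * V * Xᴴᴴ).trace := by
    rw [← hV, conjTranspose_conjTranspose, Matrix.mul_assoc, trace_mul_comm]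
  have hY : (Y * V * (Y * V)ᴴ).trace.re ≤ (Y * Yᴴ).trace.re := by
    simpa only [conjTranspose_mul, Matrix.mul_assoc] using
      re_trace_mul_mul_conjTranspose_le hproj Y
  calc (psqrt (X * Y * (X * Y)ᴴ)).trace.re ≤ ‖(psqrt (X * Y * (X * Y)ᴴ)).trace‖ :=
        Complex.re_le_norm _
    _ ≤ √((Xᴴ * Xᴴᴴ).trace.re) * √((Y * V * (Y * V)ᴴ).trace.re) :=
        htrace ▸ norm_trace_mul_conjTranspose_le _ _
    _ ≤ √((Xᴴ * X).trace.re) * √((Y * Yᴴ).trace.re) := by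
        rw [conjTranspose_conjTranspose]
        gcongr

lemma trNorm_sq_le_card_mul_trace (A : Matrix n n ℂ) :
    trNorm A ^ 2 ≤ Fintype.card n * (Aᴴ * A).trace.re := by
  obtain ⟨U, h, hU, hh, hAA⟩ := (posSemidef_conjTranspose_mul_self A).exists_unitary_diagonal
  have hsum : (Aᴴ * A).trace.re = ∑ i, √(h i) ^ 2 := by
    rw [hAA, trace_conj_diagonal hU, ← Complex.ofReal_sum, Complex.ofReal_re]
    exact Finset.sum_congr rfl fun i _ => (Real.sq_sqrt (hh i)).symm
  rw [hsum, trNorm, hAA, re_trace_psqrt_conj_diagonal hU hh]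
  exact sq_sum_le_card_mul_sum_sq

end TraceNorm

section Superfidelity

variable {ι : Type*} [Fintype ι] [LinearOrder ι]

lemma re_trace_compound2 {ρ : Matrix ι ι ℂ} (hρ : ρ.trace = 1) :
    (compound2 ρ).trace.re = (1 - purity ρ) / 2 := by
  have h : (compound2 ρ).trace = (1 - (ρ * ρ).trace) / 2 := by
    rw [eq_div_iff two_ne_zero, mul_comm, two_mul_trace_compound2, hρ, one_pow]
  rw [h, purity, Complex.div_ofNat_re, Complex.sub_re, Complex.one_re]

lemma re_trace_psqrt_compound2_conj_diagonal {U : Matrix ι ι ℂ} (hU : Uᴴ * U = 1)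
    {g : ι → ℝ} (hg : ∀ i, 0 ≤ g i) :
    (psqrt (compound2 (U * diagonal (fun i => (g i : ℂ)) * Uᴴ))).trace.re =
      ∑ p : StrictPair ι, √(g p.1.1) * √(g p.1.2) := by
  have hU₂ : (compound2 U)ᴴ * compound2 U = 1 := by
    rw [compound2_conjTranspose, ← compound2_mul, hU, compound2_one]
  have hdiag : compound2 (U * diagonal (fun i => (g i : ℂ)) * Uᴴ) = compound2 U *
      diagonal (fun p : StrictPair ι => ((g p.1.1 * g p.1.2 : ℝ) : ℂ)) * (compound2 U)ᴴ := by
    simp only [compound2_mul, compound2_diagonal, compound2_conjTranspose, Complex.ofReal_mul]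
  rw [hdiag, re_trace_psqrt_conj_diagonal hU₂ fun p => mul_nonneg (hg _) (hg _)]
  exact Finset.sum_congr rfl fun p _ => Real.sqrt_mul (hg _) _

lemma fidelity_sq_le_trace_mul_add_sqrt {ρ σ : Matrix ι ι ℂ} (hρ : IsDensityMatrix ρ)
    (hσ : IsDensityMatrix σ) :
    fidelity ρ σ ^ 2 ≤ (ρ * σ).trace.re + √((1 - purity ρ) * (1 - purity σ)) := by
  set R := psqrt ρ
  set S := psqrt σ
  have hRR : R * R = ρ := psqrt_mul_self hρ.1
  have hSS : S * S = σ := psqrt_mul_self hσ.1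
  have hRH : Rᴴ = R := psqrt_conjTranspose hρ.1
  have hSH : Sᴴ = S := psqrt_conjTranspose hσ.1
  have hRσR : R * σ * R = R * S * (R * S)ᴴ := by
    rw [conjTranspose_mul, hRH, hSH, ← hSS]
    simp only [Matrix.mul_assoc]
  obtain ⟨U, g, hU, hg, hK⟩ :=
    (posSemidef_self_mul_conjTranspose (R * S)).exists_unitary_diagonal
  have hF : fidelity ρ σ = ∑ i, √(g i) := by
    rw [fidelity, hRσR, hK, re_trace_psqrt_conj_diagonal hU hg]
  have hsum : ∑ i, √(g i) ^ 2 = (ρ * σ).trace.re := by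
    have htr : (R * S * (R * S)ᴴ).trace = (ρ * σ).trace := by
      rw [← hRσR, trace_mul_cycle, hRR]
    rw [← htr, hK, trace_conj_diagonal hU, ← Complex.ofReal_sum, Complex.ofReal_re]
    exact Finset.sum_congr rfl fun i _ => Real.sq_sqrt (hg i)
  have hpairs : ∑ p : StrictPair ι, √(g p.1.1) * √(g p.1.2) ≤
      √((1 - purity ρ) / 2) * √((1 - purity σ) / 2) := by
    have hK₂ : compound2 R * compound2 S * (compound2 R * compound2 S)ᴴ =
        compound2 (U * diagonal (fun i => (g i : ℂ)) * Uᴴ) := by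
      rw [← compound2_mul, compound2_conjTranspose, ← compound2_mul, hK]
    have hρ₂ : (compound2 R)ᴴ * compound2 R = compound2 ρ := by
      rw [compound2_conjTranspose, ← compound2_mul, hRH, hRR]
    have hσ₂ : compound2 S * (compound2 S)ᴴ = compound2 σ := by
      rw [compound2_conjTranspose, ← compound2_mul, hSH, hSS]
    have h := re_trace_psqrt_mul_le (compound2 R) (compound2 S)
    rwa [hK₂, hρ₂, hσ₂, re_trace_psqrt_compound2_conj_diagonal hU hg, re_trace_compound2 hρ.2,
      re_trace_compound2 hσ.2] at h
  have hhalf : √((1 - purity ρ) / 2) * √((1 - purity σ) / 2) =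
      √((1 - purity ρ) * (1 - purity σ)) / 2 := by
    have hρ₁ : 0 ≤ 1 - purity ρ := sub_nonneg.mpr hρ.purity_le_one
    rw [← Real.sqrt_mul (div_nonneg hρ₁ zero_le_two), div_mul_div_comm,
      Real.sqrt_div' _ (by norm_num), show (2 : ℝ) * 2 = 2 ^ 2 by norm_num,
      Real.sqrt_sq zero_le_two]
  rw [hF, sq_sum_eq_sum_sq_add_two_mul_sum_strictPair, hsum]
  linarith

end Superfidelity

section RealPart

variable {n : Type*} {ρ : Matrix n n ℂ}

lemma mconj_eq_transpose (hρ : ρ.IsHermitian) : mconj ρ = ρᵀ := by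
  ext i j
  simpa [mconj] using congrFun (congrFun hρ j) i

variable [Fintype n]

lemma IsDensityMatrix.reState (hρ : IsDensityMatrix ρ) : IsDensityMatrix (reState ρ) := by
  rw [IsDensityMatrix, _root_.reState, mconj_eq_transpose hρ.1.1]
  refine ⟨(hρ.1.add hρ.1.transpose).smul (by rw [Complex.le_def]; norm_num), ?_⟩
  rw [trace_smul, trace_add, trace_transpose, hρ.2]
  norm_num

lemma trace_mul_reState (hρ : ρ.IsHermitian) :
    (ρ * reState ρ).trace = ((ρ * ρ).trace + (ρ * ρᵀ).trace) / 2 := by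
  rw [reState, mconj_eq_transpose hρ, Matrix.mul_smul, Matrix.mul_add, trace_smul, trace_add,
    smul_eq_mul]
  ring

lemma trace_reState_mul_self (hρ : ρ.IsHermitian) :
    (reState ρ * reState ρ).trace = ((ρ * ρ).trace + (ρ * ρᵀ).trace) / 2 := by
  rw [reState, mconj_eq_transpose hρ, Matrix.smul_mul, Matrix.mul_smul, Matrix.add_mul,
    Matrix.mul_add, Matrix.mul_add, trace_smul, trace_smul, trace_add, trace_add, trace_add,
    ← transpose_mul, trace_transpose, trace_mul_comm ρᵀ ρ, smul_eq_mul, smul_eq_mul]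
  ring

variable [DecidableEq n]

lemma purity_reState (hρ : ρ.IsHermitian) : purity (reState ρ) = (ρ * reState ρ).trace.re := by
  rw [purity, trace_reState_mul_self hρ, trace_mul_reState hρ]

lemma Mtr_sq_le_card_mul_sub_purity (hρ : ρ.IsHermitian) :
    Mtr ρ ^ 2 ≤ Fintype.card n * (purity ρ - purity (reState ρ)) := by
  have hD : (ρ - mconj ρ)ᴴ * (ρ - mconj ρ) = ρ * ρ - ρ * ρᵀ - ρᵀ * ρ + ρᵀ * ρᵀ := by
    rw [mconj_eq_transpose hρ, conjTranspose_sub, hρ.eq, hρ.transpose.eq]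
    noncomm_ring
  have htr : ((ρ - mconj ρ)ᴴ * (ρ - mconj ρ)).trace.re =
      4 * (purity ρ - purity (reState ρ)) := by
    rw [hD, purity_reState hρ, trace_mul_reState hρ, trace_add, trace_sub, trace_sub,
      ← transpose_mul, trace_transpose, trace_mul_comm ρᵀ ρ, purity]
    simp only [Complex.add_re, Complex.sub_re, Complex.div_ofNat_re]
    ring
  have h := trNorm_sq_le_card_mul_trace (ρ - mconj ρ)
  rw [htr] at h
  rw [Mtr, mul_pow]
  linarith

end RealPart

lemma add_sqrt_le_of_purity_bounds {e P s M : ℝ} (he : 0 ≤ e) (hs : 1 ≤ e * s) (hP : P ≤ 1)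
    (hM : M ^ 2 ≤ e * (P - s)) :
    s + √((1 - P) * (1 - s)) ≤ 1 / e + 1 / e * √((e - 1) ^ 2 - (e - 1) * M ^ 2) := by
  have he0 : 0 < e := he.lt_of_ne (by rintro rfl; linarith)
  have hsP : s ≤ P := by nlinarith [sq_nonneg M]
  have he1 : 1 ≤ e := by nlinarith
  set u := √((1 - P) * (1 - s))
  have hu0 : 0 ≤ u := Real.sqrt_nonneg _
  have hu : u ^ 2 = (1 - P) * (1 - s) := Real.sq_sqrt (by nlinarith)
  have hamgm : 2 * u ≤ (1 - P) + (1 - s) := by nlinarith [sq_nonneg (P - s)]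
  have hkey : e * s - 1 + e * u ≤ √((e - 1) ^ 2 - (e - 1) * M ^ 2) := by
    refine (le_abs_self _).trans (Real.abs_le_sqrt ?_)
    -- as `u² = (1 - P)(1 - s)`, the gap
    -- `(e - 1)² - e (e - 1)(P - s) - (e s - 1 + e u)²` equals `e (e s - 1)(2 - P - s - 2 u)`
    nlinarith [mul_nonneg (mul_nonneg he (sub_nonneg.mpr hs)) (by linarith : 0 ≤ 2 - P - s - 2 * u),
      mul_le_mul_of_nonneg_left hM (sub_nonneg.mpr he1)]
  calc s + u = (1 + (e * s - 1 + e * u)) / e := by field_simp; ring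
    _ ≤ (1 + √((e - 1) ^ 2 - (e - 1) * M ^ 2)) / e := by gcongr
    _ = 1 / e + 1 / e * √((e - 1) ^ 2 - (e - 1) * M ^ 2) := by ring

theorem stmt14 (d : ℕ) (ρ : Matrix (Fin d) (Fin d) ℂ) (hρ : IsDensityMatrix ρ) :
    MRe ρ ≥ 1 - Real.sqrt (1 / (d : ℝ) +
      (1 / (d : ℝ)) * Real.sqrt (((d : ℝ) - 1) ^ 2 - ((d : ℝ) - 1) * Mtr ρ ^ 2)) := by
  have hσ := hρ.reState
  have hF := fidelity_sq_le_trace_mul_add_sqrt hρ hσ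
  rw [← purity_reState hρ.1.1] at hF
  have hbound := add_sqrt_le_of_purity_bounds (Nat.cast_nonneg d)
    (by simpa using hσ.one_le_card_mul_purity) hρ.purity_le_one
    (by simpa using Mtr_sq_le_card_mul_sub_purity hρ.1.1)
  rw [MRe, ge_iff_le, sub_le_sub_iff_left]
  exact (le_abs_self _).trans (Real.abs_le_sqrt (hF.trans hbound))
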